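/- arXiv:2006.03251 — 7 statements merged into one kernel-verified Lean document; each statement's English description precedes it below -/
import Mathlib

section
/- Let κ be a regular cardinal, let I be a set of cardinality κ, and let J = [I]^{<κ} be the ideal of subsets of I of cardinality < κ. In the quotient Boolean algebra P(I)/J, any family of κ many pairwise disjoint subsets A_i ⊆ I (i < κ), each of cardinality κ, has no least upper bound: for every upper bound X of the classes [A_i] there is a strictly smaller upper bound. -/
/-!
Since `[A i] ≤ [X]` and `A i` is large, each `A i` meets `X`; pick `x i ∈ A i ∩ X`. The points
`x i` are distinct by disjointness, so `D = range x` has cardinality `κ`, while `A i ∩ D = {x i}`.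
Hence `X \ D` is still an upper bound (each `A i` loses a single point), but it differs from `X`
by the large set `D`.
-/

open Cardinal

namespace Set

variable {α ι : Type*}

theorem inter_nonempty_of_mk_sdiff_lt {A X : Set α} (h : #(A \ X : Set α) < #A) :
    (A ∩ X).Nonempty := by
  by_contra hAX
  rw [not_nonempty_iff_eq_empty, ← disjoint_iff_inter_eq_empty] at hAX
  exact h.ne (by rw [hAX.sdiff_eq_left])

theorem injective_of_pairwise_disjoint_of_mem {A : ι → Set α} (hA : Pairwise (Function.onFun Disjoint A))
    {x : ι → α} (hx : ∀ i, x i ∈ A i) : Function.Injective x := by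
  intro i j hij
  by_contra hne
  exact disjoint_left.mp (hA hne) (hx i) (hij ▸ hx j)

theorem inter_range_eq_singleton_of_pairwise_disjoint {A : ι → Set α}
    (hA : Pairwise (Function.onFun Disjoint A)) {x : ι → α} (hx : ∀ i, x i ∈ A i) (i : ι) :
    A i ∩ range x = {x i} := by
  ext y
  constructor
  · rintro ⟨hy, j, rfl⟩
    obtain rfl : j = i := by
      by_contra hne
      exact disjoint_left.mp (hA hne) (hx j) hy
    rfl
  · rintro rfl
    exact ⟨hx i, i, rfl⟩

theorem mk_sdiff_sdiff_lt {κ : Cardinal} (hκ : ℵ₀ ≤ κ) {A X D : Set α}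
    (hAX : #(A \ X : Set α) < κ) (hAD : #(A ∩ D : Set α) < κ) :
    #(A \ (X \ D) : Set α) < κ := by
  rw [sdiff_sdiff_right]
  exact (mk_union_le _ _).trans_lt (add_lt_of_lt hκ hAX hAD)

end Set

open Set

theorem stmt0 {I : Type u} (κ : Cardinal.{u}) (hκ : κ.IsRegular)
    (hI : #I = κ) (A : I → Set I)
    (hdisj : Pairwise (Function.onFun Disjoint A))
    (hcard : ∀ i, #(A i) = κ)
    -- `X` represents an upper bound of the classes `[A i]` in `P(I)/[I]^{<κ}`:
    (X : Set I) (hX : ∀ i, #(A i \ X : Set I) < κ) :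
    -- there is a strictly smaller upper bound `[Y] < [X]`:
    ∃ Y : Set I, (∀ i, #(A i \ Y : Set I) < κ) ∧
      #(Y \ X : Set I) < κ ∧ ¬ #(X \ Y : Set I) < κ := by
  choose x hx using fun i => inter_nonempty_of_mk_sdiff_lt ((hcard i).symm ▸ hX i)
  have hxA : ∀ i, x i ∈ A i := fun i => (hx i).1
  have hxX : range x ⊆ X := range_subset_iff.mpr fun i => (hx i).2
  refine ⟨X \ range x, fun i => ?_, ?_, ?_⟩
  · refine mk_sdiff_sdiff_lt hκ.aleph0_le (hX i) ?_
    rw [inter_range_eq_singleton_of_pairwise_disjoint hdisj hxA i, mk_singleton]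
    exact_mod_cast hκ.nat_lt 1
  · rw [sdiff_eq_empty.mpr sdiff_subset, mk_eq_zero]
    exact hκ.pos
  · rw [sdiff_sdiff_cancel_left hxX, mk_range_eq _ (injective_of_pairwise_disjoint_of_mem hdisj hxA),
      hI]
    exact lt_irrefl κ
end

section
/- For every regular cardinal κ and every set I of cardinality κ, the quotient Boolean algebra P(I)/[I]^{<κ} is not a complete Boolean algebra (in fact not even κ⁺-complete: some family of κ many elements has no supremum). -/
/-!
STATEMENT 1: For every regular cardinal κ and set `I` of cardinality κ, the
quotient Boolean algebra `P(I)/[I]^{<κ}` is not complete, in fact not even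
κ⁺-complete: there is a family of κ many elements with no supremum.  The order
of the quotient is described on representatives: `[X] ≤ [Y] ↔ #(X \ Y) < κ`;
a supremum of the family `[A i]` would be a class `[X]` which is an upper
bound and below every upper bound.
-/

open Cardinal

theorem stmt1 {I : Type u} (κ : Cardinal.{u}) (hκ : κ.IsRegular)
    (hI : #I = κ) :
    ∃ A : I → Set I,
      ¬ ∃ X : Set I, (∀ i, #(A i \ X : Set I) < κ) ∧
        ∀ Y : Set I, (∀ i, #(A i \ Y : Set I) < κ) → #(X \ Y : Set I) < κ := by
  have hinf : ℵ₀ ≤ κ := hκ.aleph0_le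
  have hIinf : ℵ₀ ≤ #I := by rw [hI]; exact hinf
  have hmk : #I = #(I × I) := by
    rw [Cardinal.mk_prod]
    simp only [Cardinal.lift_id]
    exact (Cardinal.mul_eq_self hIinf).symm
  obtain ⟨e⟩ := Cardinal.eq.mp hmk
  refine ⟨fun i => {x | (e x).1 = i}, ?_⟩
  rintro ⟨X, hub, hlub⟩
  set A : I → Set I := fun i => {x | (e x).1 = i} with hA
  have hAcard : ∀ i, #(A i) = κ := by
    intro i
    have heq : A i ≃ I :=
      { toFun := fun x => (e x.1).2
        invFun := fun b => ⟨e.symm (i, b), by simp [hA]⟩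
        left_inv := by
          rintro ⟨x, hx⟩
          simp only [hA, Set.mem_setOf_eq] at hx
          have : (i, (e x).2) = e x := by rw [← hx]
          simp [this]
        right_inv := fun b => by simp }
    rw [Cardinal.mk_congr heq, hI]
  have hne : ∀ i, ∃ a, a ∈ A i ∧ a ∈ X := by
    intro i
    by_contra h
    push_neg at h
    have hsub : A i ⊆ A i \ X := fun a ha => ⟨ha, h a ha⟩
    have := (Cardinal.mk_le_mk_of_subset hsub).trans_lt (hub i)
    rw [hAcard i] at this
    exact lt_irrefl _ this
  choose x hxA hxX using hne
  have hxinj : Function.Injective x := by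
    intro i j h
    have hi : (e (x i)).1 = i := hxA i
    have hj : (e (x j)).1 = j := hxA j
    rw [h, hj] at hi
    exact hi.symm
  set Y : Set I := X \ Set.range x with hY
  have hubY : ∀ i, #(A i \ Y : Set I) < κ := by
    intro i
    have hsub : A i \ Y ⊆ insert (x i) (A i \ X) := by
      rintro a ⟨haA, haY⟩
      by_cases haX : a ∈ X
      · have har : a ∈ Set.range x := by
          by_contra har
          exact haY ⟨haX, har⟩
        obtain ⟨j, hj⟩ := har
        have : (e a).1 = i := haA
        rw [← hj, hxA j] at this
        left
        rw [← hj, this]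
      · exact Or.inr ⟨haA, haX⟩
    calc #(A i \ Y : Set I) ≤ #(insert (x i) (A i \ X) : Set I) :=
            Cardinal.mk_le_mk_of_subset hsub
      _ ≤ #(A i \ X : Set I) + 1 := Cardinal.mk_insert_le
      _ < κ := Cardinal.add_lt_of_lt hinf (hub i) (lt_of_lt_of_le one_lt_aleph0 hinf)
  have hlt := hlub Y hubY
  have hsub : Set.range x ⊆ X \ Y := by
    rintro a ⟨i, rfl⟩
    exact ⟨hxX i, fun h => h.2 ⟨i, rfl⟩⟩
  have : κ ≤ #(X \ Y : Set I) := by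
    calc κ = #I := hI.symm
      _ = #(Set.range x) := (Cardinal.mk_range_eq x hxinj).symm
      _ ≤ #(X \ Y : Set I) := Cardinal.mk_le_mk_of_subset hsub
  exact absurd hlt (not_lt.mpr this)
end

section
/- For every regular cardinal κ there exists a κ-complete filter F on a set I and a family of complete Boolean algebras (indexed by I, namely constantly the two-element algebra) whose reduced product modulo F is not a complete Boolean algebra. Hence the class of complete Boolean algebras is not closed under reduced products modulo κ-complete filters, for any regular κ. -/
/-!
STATEMENT 3: For every regular cardinal κ there is a κ-complete filter `F` on
a set `I` and a family of complete Boolean algebras — constantly the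
two-element algebra `Bool` — whose reduced product modulo `F` (the germ
algebra `Filter.Germ F Bool`, a quotient of `∏ᵢ Bool`) is not complete: some
family of elements has no least upper bound.  Hence complete Boolean algebras
are not closed under reduced products modulo κ-complete filters.
-/

open Cardinal Filter

theorem stmt3 (κ : Cardinal.{u}) (hκ : κ.IsRegular) :
    ∃ (I : Type u) (F : Filter I),
      -- `F` is κ-complete:
      (∀ S : Set (Set I), #S < κ → (∀ s ∈ S, s ∈ F) → ⋂₀ S ∈ F) ∧
      -- the factors (constantly `Bool`) are complete Boolean algebras:
      (∀ s : Set Bool, ∃ b, IsLUB s b) ∧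
      -- but the reduced product `∏_F Bool = Germ F Bool` is not complete:
      ∃ A : I → Filter.Germ F Bool,
        ¬ ∃ x : Filter.Germ F Bool, IsLUB (Set.range A) x := by
  classical
  have hne : Nonempty κ.out := by
    rw [← Cardinal.mk_ne_zero_iff, Cardinal.mk_out]; exact hκ.pos.ne'
  refine ⟨κ.out × κ.out, cocardinal _ hκ, ?_, fun s => ⟨sSup s, isLUB_sSup s⟩, ?_⟩
  · intro S hS hSF
    exact (cardinal_sInter_mem hS).2 hSF
  set I := κ.out × κ.out
  set F : Filter I := cocardinal I hκ with hF
  -- the family: indicator of the column through p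
  refine ⟨fun p => (↑(fun q : I => decide (q.1 = p.1)) : Germ F Bool), ?_⟩
  rintro ⟨x, hub, hlub⟩
  induction x using Filter.Germ.inductionOn with
  | _ g =>
  -- each column's "bad set" is small
  have hub' : ∀ α : κ.out, #{q : I | ¬ (decide (q.1 = α) ≤ g q)} < κ := by
    intro α
    have h := hub (Set.mem_range_self (α, Classical.arbitrary κ.out))
    rw [Filter.Germ.coe_le] at h
    exact h
  -- so each column contains a point where g is true
  have hpick : ∀ α : κ.out, ∃ β : κ.out, g (α, β) = true := by
    intro α
    by_contra hcon
    push_neg at hcon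
    have hinj : Function.Injective
        (fun β : κ.out => (⟨(α, β), by
          simp only [Set.mem_setOf_eq, Bool.le_iff_imp, decide_eq_true_eq]
          simpa using hcon β⟩ :
          {q : I | ¬ (decide (q.1 = α) ≤ g q)})) := by
      intro a b hab
      exact congrArg Prod.snd (congrArg Subtype.val hab)
    have := (Cardinal.mk_le_of_injective hinj).trans_lt (hub' α)
    rw [Cardinal.mk_out] at this
    exact absurd this (lt_irrefl κ)
  choose β₀ hβ₀ using hpick
  -- diagonalized candidate
  set g' : I → Bool := fun q => if q.2 = β₀ q.1 then false else g q with hg'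
  -- g' is still an upper bound
  have hub2 : (↑g' : Germ F Bool) ∈ upperBounds (Set.range fun p : I =>
      (↑(fun q : I => decide (q.1 = p.1)) : Germ F Bool)) := by
    rintro y ⟨p, rfl⟩
    rw [Filter.Germ.coe_le]
    have hsub : {q : I | ¬ (decide (q.1 = p.1) ≤ g' q)} ⊆
        {q : I | ¬ (decide (q.1 = p.1) ≤ g q)} ∪ {(p.1, β₀ p.1)} := by
      intro q hq
      simp only [Set.mem_setOf_eq, Bool.le_iff_imp, decide_eq_true_eq, not_forall] at hq
      obtain ⟨h1, h2⟩ := hq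
      by_cases hc : q.2 = β₀ q.1
      · right
        have : q = (q.1, q.2) := rfl
        rw [Set.mem_singleton_iff, this, h1, hc, h1]
      · left
        simp only [Set.mem_setOf_eq, Bool.le_iff_imp, decide_eq_true_eq, not_forall]
        refine ⟨h1, ?_⟩
        simpa [hg', hc] using h2
    have : #{q : I | ¬ (decide (q.1 = p.1) ≤ g' q)} < κ := by
      refine lt_of_le_of_lt (Cardinal.mk_le_mk_of_subset hsub) ?_
      refine lt_of_le_of_lt (Cardinal.mk_union_le _ _) ?_
      exact Cardinal.add_lt_of_lt hκ.aleph0_le (hub' p.1)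
        ((Cardinal.mk_le_one_iff_set_subsingleton.2 (Set.subsingleton_singleton)).trans_lt
          (Cardinal.one_lt_aleph0.trans_le hκ.aleph0_le))
    exact this
  -- but x ≤ g' fails on the diagonal, a set of size κ
  have hle := hlub hub2
  rw [Filter.Germ.coe_le] at hle
  have hle' : #{q : I | ¬ (g q ≤ g' q)} < κ := hle
  have hinj2 : Function.Injective (fun α : κ.out => (⟨(α, β₀ α), by
      simp [hg', Bool.le_iff_imp, hβ₀ α]⟩ : {q : I | ¬ (g q ≤ g' q)})) := by
    intro a b hab
    exact congrArg Prod.fst (congrArg Subtype.val hab)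
  have := (Cardinal.mk_le_of_injective hinj2).trans_lt hle'
  rw [Cardinal.mk_out] at this
  exact absurd this (lt_irrefl κ)
end

section
/- For every regular cardinal κ there exists a κ-complete filter F on a set I such that the reduced power of the two-element lattice modulo F (equivalently, the underlying lattice of P(I)/[I]^{<κ}) is not a complete lattice. Hence complete lattices are not closed under reduced products modulo κ-complete filters. -/
/-!
STATEMENT 4: For every regular cardinal κ there is a κ-complete filter `F` on
a set `I` such that the reduced power of the two-element lattice `Bool`
modulo `F` (the germ lattice `Filter.Germ F Bool`, which is the lattice
underlying `P(I)/[I]^{<κ}`) is not a complete lattice: some family of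
elements has no least upper bound.  Hence complete lattices are not closed
under reduced products modulo κ-complete filters.
-/

open Cardinal Filter

section Aux
variable {κ : Cardinal.{u}} (hκ : κ.IsRegular)

open scoped Classical in
lemma stmt4_key (hκ : κ.IsRegular)
    (g : κ.out × κ.out → Bool)
    (h : IsLUB (Set.range (fun p : κ.out × κ.out =>
        ((fun q : κ.out × κ.out => decide (q.1 = p.1)) :
          Filter.Germ (Filter.cocardinal (κ.out × κ.out) hκ) Bool)))
      ((g : (κ.out × κ.out) → Bool) : Filter.Germ (Filter.cocardinal (κ.out × κ.out) hκ) Bool)) :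
    False := by
  set F := Filter.cocardinal (κ.out × κ.out) hκ with hF
  -- each column is ≤ g
  have hub : ∀ a : κ.out, #{q : κ.out × κ.out | ¬ (decide (q.1 = a) ≤ g q)} < κ := by
    intro a
    have := h.1 (Set.mem_range_self (a, a))
    rw [Filter.Germ.coe_le] at this
    exact this
  -- choose a point in each column where g is true
  have hex : ∀ a : κ.out, ∃ b, g (a, b) = true := by
    intro a
    by_contra hcon
    push_neg at hcon
    have hsub : Set.univ ⊆ ((fun b : κ.out => ((a, b) : κ.out × κ.out)) ⁻¹'
        {q : κ.out × κ.out | ¬ (decide (q.1 = a) ≤ g q)}) := by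
      intro b _
      simp only [Set.mem_preimage, Set.mem_setOf_eq, decide_eq_true_eq]
      intro hle
      have h1 : (true : Bool) ≤ g (a, b) := by simpa using hle
      exact hcon b (le_antisymm (Bool.le_true _) h1)
    have hinj : Function.Injective (fun b : κ.out => ((a, b) : κ.out × κ.out)) := by
      intro x y hxy; simpa using congrArg Prod.snd hxy
    have : κ ≤ #{q : κ.out × κ.out | ¬ (decide (q.1 = a) ≤ g q)} := by
      calc κ = #(κ.out) := (Cardinal.mk_out κ).symm
        _ ≤ _ := Cardinal.mk_le_of_injective (f := fun b : κ.out =>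
            (⟨(a, b), hsub (Set.mem_univ b)⟩ : {q : κ.out × κ.out | ¬ (decide (q.1 = a) ≤ g q)}))
          (fun x y hxy => hinj (congrArg Subtype.val hxy))
    exact absurd (hub a) (not_lt.2 this)
  choose d hd using hex
  -- the smaller upper bound
  set g' : κ.out × κ.out → Bool := fun q => g q && !(decide (q.2 = d q.1)) with hg'
  have hub' : (↑g' : Filter.Germ F Bool) ∈ upperBounds (Set.range (fun p : κ.out × κ.out =>
      ((fun q : κ.out × κ.out => decide (q.1 = p.1)) : Filter.Germ F Bool))) := by
    rintro x ⟨p, rfl⟩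
    rw [Filter.Germ.coe_le]
    have hsub : {q : κ.out × κ.out | ¬ (decide (q.1 = p.1) ≤ g' q)} ⊆
        {q : κ.out × κ.out | ¬ (decide (q.1 = p.1) ≤ g q)} ∪ {(p.1, d p.1)} := by
      intro q hq
      simp only [Set.mem_setOf_eq, hg'] at hq
      by_cases hq1 : q.1 = p.1
      · by_cases hg : g q = true
        · -- then !decide (q.2 = d q.1) = false, so q.2 = d q.1
          right
          have h2 : q.2 = d q.1 := by
            by_contra hne
            apply hq
            simp [hg, hne]
          have h3 : q = (p.1, d p.1) := by
            refine Prod.ext hq1 ?_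
            show q.2 = d p.1
            rw [h2, hq1]
          simp [h3]
        · left
          simp only [Set.mem_setOf_eq, hq1]
          intro hle
          have h1 : (true : Bool) ≤ g q := by simpa using hle
          exact hg (le_antisymm (Bool.le_true _) h1)
      · exfalso
        apply hq
        simp [hq1]
    have : #({q : κ.out × κ.out | ¬ (decide (q.1 = p.1) ≤ g q)} ∪ {(p.1, d p.1)} : Set _) < κ := by
      apply lt_of_le_of_lt (Cardinal.mk_union_le _ _)
      have h1 := hub p.1
      have h2 : #({(p.1, d p.1)} : Set (κ.out × κ.out)) < κ := by
        rw [Cardinal.mk_singleton]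
        exact lt_of_lt_of_le Cardinal.one_lt_aleph0 hκ.aleph0_le
      exact Cardinal.add_lt_of_lt hκ.aleph0_le h1 h2
    exact lt_of_le_of_lt (Cardinal.mk_le_mk_of_subset hsub) this
  -- so g ≤ g'
  have hle : (↑g : Filter.Germ F Bool) ≤ ↑g' := h.2 hub'
  rw [Filter.Germ.coe_le] at hle
  -- but the diagonal {(a, d a)} is a κ-sized set where g ≰ g'
  have hbig : κ ≤ #{q : κ.out × κ.out | ¬ (g q ≤ g' q)} := by
    have hmem : ∀ a : κ.out, ((a, d a) : κ.out × κ.out) ∈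
        {q : κ.out × κ.out | ¬ (g q ≤ g' q)} := by
      intro a
      simp only [Set.mem_setOf_eq, hg', hd a]
      simp [hd a]
    calc κ = #(κ.out) := (Cardinal.mk_out κ).symm
      _ ≤ _ := Cardinal.mk_le_of_injective (f := fun a : κ.out =>
          (⟨(a, d a), hmem a⟩ : {q : κ.out × κ.out | ¬ (g q ≤ g' q)}))
        (by intro x y hxy; simpa using congrArg (fun s : {q : κ.out × κ.out | _} => s.1.1) hxy)
  exact absurd hle (not_lt.2 hbig)

end Aux

theorem stmt4 (κ : Cardinal.{u}) (hκ : κ.IsRegular) :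
    ∃ (I : Type u) (F : Filter I),
      -- `F` is κ-complete:
      (∀ S : Set (Set I), #S < κ → (∀ s ∈ S, s ∈ F) → ⋂₀ S ∈ F) ∧
      -- the reduced power of the two-element lattice is not a complete
      -- lattice:
      ∃ A : I → Filter.Germ F Bool,
        ¬ ∃ x : Filter.Germ F Bool, IsLUB (Set.range A) x := by
  classical
  refine ⟨κ.out × κ.out, Filter.cocardinal _ hκ,
    fun S hS h => CardinalInterFilter.cardinal_sInter_mem S hS h,
    fun p => ((fun q : κ.out × κ.out => decide (q.1 = p.1)) :
      Filter.Germ (Filter.cocardinal _ hκ) Bool), ?_⟩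
  rintro ⟨x, hx⟩
  induction x using Filter.Germ.inductionOn with
  | _ g => exact stmt4_key hκ g hx
end

section
/- A Boolean algebra B is injective with respect to embeddings of Boolean algebras (i.e., for every injective Boolean algebra homomorphism f : A → C and every homomorphism g : A → B there is a homomorphism h : C → B with h ∘ f = g) if and only if B is a complete Boolean algebra. -/
/-!
Sikorski: take, by Zorn's lemma, a maximal partial homomorphism `C → B` extending `g ∘ f⁻¹`,
encoded as a Boolean subalgebra of `C × B` that is a graph. For `c ∈ C`, let `b` be the supremum
of the images of the elements of the domain below `c`; the images of elements above `c` lie above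
`b`, which is exactly what lets the graph extend to the subalgebra generated by `(c, b)`. So by
maximality `c` is already in the domain.

Conversely, the Stone map embeds `B` into the complete algebra of sets of prime ideals of `B`, and
injectivity gives a homomorphic retraction of it; a monotone retraction of a complete lattice
sends suprema to least upper bounds.
-/

universe u

open Function Set

def BoundedLatticeHom.prod {α β γ : Type*} [Lattice α] [Lattice β] [Lattice γ] [BoundedOrder α]
    [BoundedOrder β] [BoundedOrder γ] (f : BoundedLatticeHom α β) (g : BoundedLatticeHom α γ) :
    BoundedLatticeHom α (β × γ) where
  toFun a := (f a, g a)
  map_sup' a b := by simp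
  map_inf' a b := by simp
  map_top' := by simp only [map_top]; rfl
  map_bot' := by simp only [map_bot]; rfl

namespace BooleanSubalgebra

variable {α β : Type*} [BooleanAlgebra α] [BooleanAlgebra β]

theorem mem_sSup_of_directedOn {c : Set (BooleanSubalgebra α)} (hne : c.Nonempty)
    (hd : DirectedOn (· ≤ ·) c) {x : α} (hx : x ∈ sSup c) : ∃ L ∈ c, x ∈ L := by
  let M : BooleanSubalgebra α :=
    { carrier := ⋃ L ∈ c, (L : Set α)
      supClosed' := by
        simp only [SupClosed, mem_iUnion₂]
        rintro x ⟨L, hL, hx⟩ y ⟨L', hL', hy⟩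
        obtain ⟨N, hN, hLN, hL'N⟩ := hd L hL L' hL'
        exact ⟨N, hN, sup_mem (hLN hx) (hL'N hy)⟩
      infClosed' := by
        simp only [InfClosed, mem_iUnion₂]
        rintro x ⟨L, hL, hx⟩ y ⟨L', hL', hy⟩
        obtain ⟨N, hN, hLN, hL'N⟩ := hd L hL L' hL'
        exact ⟨N, hN, inf_mem (hLN hx) (hL'N hy)⟩
      compl_mem' := by
        simp only [mem_iUnion₂]
        rintro x ⟨L, hL, hx⟩
        exact ⟨L, hL, compl_mem hx⟩
      bot_mem' := mem_iUnion₂.2 ⟨_, hne.some_mem, bot_mem⟩ }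
  have hcM : sSup c ≤ M := sSup_le fun L hL _ hy => mem_iUnion₂.2 ⟨L, hL, hy⟩
  simpa [M] using hcM hx

/-- Elements of the subalgebra generated by `L` and `z` are those agreeing with a member of `L`
below `z` and with a (possibly different) member of `L` below `zᶜ`. -/
def adjoin (L : BooleanSubalgebra α) (z : α) : BooleanSubalgebra α where
  carrier := {w | (∃ x ∈ L, w ⊓ z = x ⊓ z) ∧ ∃ y ∈ L, w ⊓ zᶜ = y ⊓ zᶜ}
  supClosed' := by
    rintro w ⟨⟨x, hx, hwx⟩, y, hy, hwy⟩ w' ⟨⟨x', hx', hwx'⟩, y', hy', hwy'⟩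
    exact ⟨⟨x ⊔ x', sup_mem hx hx', by rw [inf_sup_right, inf_sup_right, hwx, hwx']⟩,
      y ⊔ y', sup_mem hy hy', by rw [inf_sup_right, inf_sup_right, hwy, hwy']⟩
  infClosed' := by
    rintro w ⟨⟨x, hx, hwx⟩, y, hy, hwy⟩ w' ⟨⟨x', hx', hwx'⟩, y', hy', hwy'⟩
    exact ⟨⟨x ⊓ x', inf_mem hx hx',
        by rw [inf_inf_distrib_right, hwx, hwx', ← inf_inf_distrib_right]⟩,
      y ⊓ y', inf_mem hy hy', by rw [inf_inf_distrib_right, hwy, hwy', ← inf_inf_distrib_right]⟩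
  compl_mem' := by
    have hcompl : ∀ v u : α, vᶜ ⊓ u = (v ⊓ u)ᶜ ⊓ u := fun v u => by
      rw [compl_inf, inf_sup_right, compl_inf_self, sup_bot_eq]
    have hcongr : ∀ {w x u : α}, w ⊓ u = x ⊓ u → wᶜ ⊓ u = xᶜ ⊓ u := fun h => by
      rw [hcompl, h, ← hcompl]
    rintro w ⟨⟨x, hx, hwx⟩, y, hy, hwy⟩
    exact ⟨⟨xᶜ, compl_mem hx, hcongr hwx⟩, yᶜ, compl_mem hy, hcongr hwy⟩
  bot_mem' := ⟨⟨⊥, bot_mem, rfl⟩, ⊥, bot_mem, rfl⟩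

theorem le_adjoin (L : BooleanSubalgebra α) (z : α) : L ≤ L.adjoin z :=
  fun x hx => ⟨⟨x, hx, rfl⟩, x, hx, rfl⟩

theorem mem_adjoin_self (L : BooleanSubalgebra α) (z : α) : z ∈ L.adjoin z :=
  ⟨⟨⊤, top_mem, by simp⟩, ⊥, bot_mem, by simp⟩

/-- The graph of a partial homomorphism `α → β`: on a subalgebra of `α × β`, triviality of this
"kernel" is equivalent to functionality. -/
def IsGraph (p : BooleanSubalgebra (α × β)) : Prop := ∀ w ∈ p, w.1 = ⊥ → w.2 = ⊥

variable {p : BooleanSubalgebra (α × β)}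

theorem IsGraph.snd_le_snd (hp : p.IsGraph) {x y : α × β} (hx : x ∈ p) (hy : y ∈ p)
    (h : x.1 ≤ y.1) : x.2 ≤ y.2 :=
  sdiff_eq_bot_iff.1 (hp _ (sdiff_mem hx hy) (sdiff_eq_bot_iff.2 h))

theorem IsGraph.eq_of_mem (hp : p.IsGraph) {a : α} {b b' : β} (h : (a, b) ∈ p)
    (h' : (a, b') ∈ p) : b = b' :=
  le_antisymm (hp.snd_le_snd h h' le_rfl) (hp.snd_le_snd h' h le_rfl)

theorem IsGraph.exists_boundedLatticeHom (hp : p.IsGraph) (htot : ∀ a, ∃ b, (a, b) ∈ p) :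
    ∃ φ : BoundedLatticeHom α β, ∀ a, (a, φ a) ∈ p := by
  choose φ hφ using htot
  exact ⟨{ toFun := φ
           map_sup' := fun a a' => hp.eq_of_mem (hφ _) (sup_mem (hφ a) (hφ a'))
           map_inf' := fun a a' => hp.eq_of_mem (hφ _) (inf_mem (hφ a) (hφ a'))
           map_top' := hp.eq_of_mem (hφ _) top_mem
           map_bot' := hp.eq_of_mem (hφ _) bot_mem }, hφ⟩

theorem isGraph_sSup_of_directedOn {c : Set (BooleanSubalgebra (α × β))} (hne : c.Nonempty)
    (hd : DirectedOn (· ≤ ·) c) (hc : ∀ p ∈ c, p.IsGraph) : (sSup c).IsGraph := fun w hw =>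
  let ⟨p, hp, hwp⟩ := mem_sSup_of_directedOn hne hd hw
  hc p hp w hwp

theorem isGraph_adjoin {a : α} {b : β} (hlo : ∀ x ∈ p, x.1 ≤ a → x.2 ≤ b)
    (hhi : ∀ x ∈ p, a ≤ x.1 → b ≤ x.2) : (p.adjoin (a, b)).IsGraph := by
  rintro w ⟨⟨x, hx, hwx⟩, y, hy, hwy⟩ hw
  have hxa : x.1 ⊓ a = ⊥ := (congrArg Prod.fst hwx).symm.trans (by simp [hw])
  have hya : y.1 ⊓ aᶜ = ⊥ := (congrArg Prod.fst hwy).symm.trans (by simp [hw])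
  have hwb : w.2 ⊓ b = x.2 ⊓ b := congrArg Prod.snd hwx
  have hwb' : w.2 ⊓ bᶜ = y.2 ⊓ bᶜ := congrArg Prod.snd hwy
  have hxb : Disjoint x.2 b :=
    le_compl_iff_disjoint_left.1 <|
      hhi xᶜ (compl_mem hx) (le_compl_iff_disjoint_left.2 (disjoint_iff.2 hxa))
  have hyb : y.2 ≤ b := hlo y hy (disjoint_compl_right_iff.1 (disjoint_iff.2 hya))
  rw [← sup_inf_inf_compl (x := w.2) (y := b), hwb, hwb', disjoint_iff.1 hxb,
    disjoint_iff.1 (disjoint_compl_right_iff.2 hyb), sup_bot_eq]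

theorem IsGraph.exists_isGraph_adjoin (hβ : ∀ S : Set β, ∃ b, IsLUB S b) (hp : p.IsGraph)
    (a : α) : ∃ b, (p.adjoin (a, b)).IsGraph := by
  obtain ⟨b, hb⟩ := hβ (Prod.snd '' {x | x ∈ p ∧ x.1 ≤ a})
  refine ⟨b, isGraph_adjoin (fun x hx hxa => hb.1 ⟨x, ⟨hx, hxa⟩, rfl⟩) fun x hx hax => hb.2 ?_⟩
  rintro _ ⟨y, ⟨hy, hya⟩, rfl⟩
  exact hp.snd_le_snd hy hx (hya.trans hax)

theorem IsGraph.exists_le_total (hβ : ∀ S : Set β, ∃ b, IsLUB S b) (hp : p.IsGraph) :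
    ∃ q, p ≤ q ∧ q.IsGraph ∧ ∀ a, ∃ b, (a, b) ∈ q := by
  obtain ⟨q, hpq, hq⟩ := zorn_le_nonempty₀ {q | IsGraph q}
    (fun c hc hch r hr => ⟨sSup c, isGraph_sSup_of_directedOn ⟨r, hr⟩ hch.directedOn hc,
      fun _ => le_sSup⟩) p hp
  refine ⟨q, hpq, hq.prop, fun a => ?_⟩
  obtain ⟨b, hb⟩ := hq.prop.exists_isGraph_adjoin hβ a
  exact ⟨b, hq.eq_of_le hb (le_adjoin _ _) ▸ mem_adjoin_self _ _⟩

end BooleanSubalgebra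

theorem isLUB_of_leftInverse {α β : Type*} [Preorder α] [CompleteLattice β] {e : α → β}
    {r : β → α} (he : Monotone e) (hr : Monotone r) (hre : LeftInverse r e) (S : Set α) :
    IsLUB S (r (sSup (e '' S))) :=
  ⟨fun s hs => hre s ▸ hr (le_sSup (mem_image_of_mem e hs)),
    fun u hu => hre u ▸ hr (sSup_le (by rintro _ ⟨s, hs, rfl⟩; exact he (hu hs)))⟩

section Stone

variable {α : Type*} [DistribLattice α]

theorem Order.Ideal.exists_isPrime_mem_notMem_of_not_le {x y : α} (hxy : ¬x ≤ y) :
    ∃ J : Order.Ideal α, J.IsPrime ∧ y ∈ J ∧ x ∉ J := by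
  have hdisj : Disjoint (Order.PFilter.principal x : Set α) (Order.Ideal.principal y : Set α) :=
    Set.disjoint_left.2 fun z hxz hzy => hxy (le_trans hxz hzy)
  obtain ⟨J, hJ, hyJ, hxJ⟩ := DistribLattice.prime_ideal_of_disjoint_filter_ideal hdisj
  exact ⟨J, hJ, hyJ (Order.Ideal.mem_principal.2 le_rfl),
    Set.disjoint_left.1 hxJ (Order.PFilter.mem_principal.2 le_rfl)⟩

variable [BoundedOrder α]

variable (α) in
def stoneHom : BoundedLatticeHom α (Set {J : Order.Ideal α // J.IsPrime}) where
  toFun x := {J | x ∉ J.1}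
  map_sup' x y := by
    ext J
    change x ⊔ y ∉ J.1 ↔ x ∉ J.1 ∨ y ∉ J.1
    rw [Order.Ideal.sup_mem_iff, not_and_or]
  map_inf' x y := by
    ext J
    change x ⊓ y ∉ J.1 ↔ x ∉ J.1 ∧ y ∉ J.1
    rw [← not_or]
    exact not_congr ⟨J.2.mem_or_mem,
      fun h => h.elim (J.1.lower inf_le_left) (J.1.lower inf_le_right)⟩
  map_top' := by ext J; simp [J.2.top_notMem]
  map_bot' := by ext J; simp

theorem stoneHom_injective : Injective (stoneHom α) := by
  have hle : ∀ {x y : α}, stoneHom α x = stoneHom α y → x ≤ y := by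
    intro x y hxy
    by_contra h
    obtain ⟨J, hJ, hyJ, hxJ⟩ := Order.Ideal.exists_isPrime_mem_notMem_of_not_le h
    exact (hxy ▸ (hxJ : ⟨J, hJ⟩ ∈ stoneHom α x) : ⟨J, hJ⟩ ∈ stoneHom α y) hyJ
  exact fun x y hxy => le_antisymm (hle hxy) (hle hxy.symm)

end Stone

open BooleanSubalgebra in
theorem BoundedLatticeHom.exists_comp_eq_of_injective {A B C : Type*} [BooleanAlgebra A]
    [BooleanAlgebra B] [BooleanAlgebra C] (hB : ∀ S : Set B, ∃ b, IsLUB S b)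
    {f : BoundedLatticeHom A C} (hf : Injective f) (g : BoundedLatticeHom A B) :
    ∃ h : BoundedLatticeHom C B, h.comp f = g := by
  have hgraph : ((⊤ : BooleanSubalgebra A).map (f.prod g)).IsGraph := by
    rintro _ ⟨a, -, rfl⟩ (ha : f a = ⊥)
    change g a = ⊥
    rw [hf (ha.trans (BotHomClass.map_bot f).symm), BotHomClass.map_bot]
  obtain ⟨p, hgp, hp, htot⟩ := hgraph.exists_le_total hB
  obtain ⟨h, hh⟩ := hp.exists_boundedLatticeHom htot
  exact ⟨h, BoundedLatticeHom.ext fun a =>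
    hp.eq_of_mem (hh (f a)) (hgp (mem_map_of_mem (f.prod g) mem_top))⟩

theorem stmt5 (B : Type u) [BooleanAlgebra B] :
    (∀ (A C : Type u) [BooleanAlgebra A] [BooleanAlgebra C]
        (f : BoundedLatticeHom A C), Function.Injective f →
        ∀ g : BoundedLatticeHom A B,
          ∃ h : BoundedLatticeHom C B, h.comp f = g) ↔
      (∀ S : Set B, ∃ b, IsLUB S b) := by
  constructor
  · intro hinj S
    obtain ⟨r, hr⟩ := hinj B _ (stoneHom B) stoneHom_injective (BoundedLatticeHom.id B)
    exact ⟨_, isLUB_of_leftInverse (OrderHomClass.mono (stoneHom B)) (OrderHomClass.mono r)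
      (DFunLike.congr_fun hr) S⟩
  · intro hB A C _ _ f hf g
    exact BoundedLatticeHom.exists_comp_eq_of_injective hB hf g
end

section
/- A partially ordered set P is injective with respect to order embeddings (i.e., for every order embedding f : A → C of posets and every monotone map g : A → P there exists a monotone map h : C → P with h ∘ f = g) if and only if P is a complete lattice. -/
/-!
A complete lattice `P` is injective: a monotone `g : A → P` extends along an order embedding
`f : A ↪o C` by its left Kan extension `c ↦ ⨆ {g a | f a ≤ c}`, which agrees with `g` on the
image of `f` because `f` reflects the order. Conversely, `P` embeds into the complete lattice of
its lower sets by `p ↦ Iic p`; injectivity yields a monotone retraction of this embedding, and a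
monotone retract of a complete lattice is complete.
-/

universe u

section Extension

variable {A C P : Type*} [Preorder A] [Preorder C] [CompleteLattice P]

def OrderEmbedding.supExtend (f : A ↪o C) (g : A →o P) : C →o P where
  toFun c := ⨆ (a) (_ : f a ≤ c), g a
  monotone' _ _ hcc' := iSup₂_mono' fun a ha => ⟨a, ha.trans hcc', le_rfl⟩

theorem OrderEmbedding.supExtend_apply_apply (f : A ↪o C) (g : A →o P) (a : A) :
    f.supExtend g (f a) = g a :=
  le_antisymm (iSup₂_le fun _ h => g.monotone (f.le_iff_le.1 h))
    (le_iSup₂_of_le a le_rfl le_rfl)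

end Extension

def LowerSet.iicOrderEmbedding {α : Type*} [PartialOrder α] : α ↪o LowerSet α :=
  OrderEmbedding.ofMapLEIff LowerSet.Iic fun _ _ => LowerSet.Iic_le.trans LowerSet.mem_Iic_iff

theorem isLUB_of_monotone_retraction {P L : Type*} [Preorder P] [CompleteLattice L]
    (e : P →o L) (r : L →o P) (hr : ∀ p, r (e p) = p) (S : Set P) :
    IsLUB S (r (sSup (e '' S))) := by
  refine ⟨fun s hs => ?_, fun u hu => ?_⟩
  · calc s = r (e s) := (hr s).symm
      _ ≤ r (sSup (e '' S)) := r.monotone (le_sSup (Set.mem_image_of_mem e hs))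
  · calc r (sSup (e '' S)) ≤ r (e u) := r.monotone (sSup_le (by
          rintro _ ⟨s, hs, rfl⟩
          exact e.monotone (hu hs)))
      _ = u := hr u

theorem stmt6 (P : Type u) [PartialOrder P] :
    (∀ (A C : Type u) [PartialOrder A] [PartialOrder C]
        (f : A ↪o C) (g : A →o P),
          ∃ h : C →o P, ∀ a, h (f a) = g a) ↔
      (∀ S : Set P, ∃ p, IsLUB S p) := by
  constructor
  · intro hinjective S
    obtain ⟨r, hr⟩ := hinjective P (LowerSet P) LowerSet.iicOrderEmbedding OrderHom.id
    exact ⟨_, isLUB_of_monotone_retraction LowerSet.iicOrderEmbedding.toOrderHom r hr S⟩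
  · intro hcomplete A C _ _ f g
    choose lub isLUB_lub using hcomplete
    let : SupSet P := ⟨lub⟩
    let := completeLatticeOfSup P isLUB_lub
    exact ⟨f.supExtend g, f.supExtend_apply_apply g⟩
end

section
/- Every Boolean algebra embeds into a complete Boolean algebra via an injective Boolean algebra homomorphism. -/
/-!
STATEMENT 8: Every Boolean algebra embeds, via an injective Boolean algebra
homomorphism (bounded lattice homomorphism), into a complete Boolean algebra
(one in which every subset has a least upper bound).
-/

theorem stmt8 (B : Type u) [BooleanAlgebra B] :
    ∃ (C : Type u) (_ : BooleanAlgebra C),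
      (∀ S : Set C, ∃ c, IsLUB S c) ∧
      ∃ f : BoundedLatticeHom B C, Function.Injective f := by
  classical
  refine ⟨Set {J : Order.Ideal B // J.IsPrime}, inferInstance,
    fun S => ⟨sSup S, isLUB_sSup S⟩, ?_⟩
  refine ⟨⟨⟨⟨fun b => {J | b ∉ J.1}, ?_⟩, ?_⟩, ?_, ?_⟩, ?_⟩
  · intro a b
    ext J
    simp only [Set.mem_setOf_eq, Set.sup_eq_union, Set.mem_union, Order.Ideal.sup_mem_iff, not_and_or]
  · intro a b
    ext J
    simp only [Set.mem_setOf_eq, Set.mem_inter_iff]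
    constructor
    · intro h
      exact ⟨fun ha => h (J.1.lower inf_le_left ha),
             fun hb => h (J.1.lower inf_le_right hb)⟩
    · rintro ⟨ha, hb⟩ hab
      rcases J.2.mem_or_mem hab with h | h
      exacts [ha h, hb h]
  · ext J
    simp only [Set.top_eq_univ, Set.mem_setOf_eq, Set.mem_univ, iff_true]
    exact J.2.toIsProper.top_notMem
  · ext J
    simp [J.1.bot_mem]
  · -- injectivity
    have key : ∀ a b : B, ¬ a ≤ b → ∃ J : {J : Order.Ideal B // J.IsPrime},
        a ∉ J.1 ∧ b ∈ J.1 := by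
      intro a b hab
      have hdisj : Disjoint ((Order.PFilter.principal a : Order.PFilter B) : Set B)
          ((Order.Ideal.principal b : Order.Ideal B) : Set B) := by
        rw [Set.disjoint_left]
        intro x hx hx'
        exact hab (le_trans (Order.PFilter.mem_principal.mp hx)
          (Order.Ideal.mem_principal.mp hx'))
      obtain ⟨J, hJprime, hIJ, hJdisj⟩ :=
        DistribLattice.prime_ideal_of_disjoint_filter_ideal hdisj
      refine ⟨⟨J, hJprime⟩, ?_, hIJ Order.Ideal.mem_principal_self⟩
      intro haJ
      exact Set.disjoint_left.mp hJdisj (Order.PFilter.mem_principal.mpr le_rfl) haJ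
    intro a b h
    by_contra hne
    rcases not_and_or.mp (fun hh : a ≤ b ∧ b ≤ a => hne (le_antisymm hh.1 hh.2)) with hab | hba
    · obtain ⟨J, ha, hb⟩ := key a b hab
      exact (Set.ext_iff.mp h J).mp ha hb
    · obtain ⟨J, hb, ha⟩ := key b a hba
      exact (Set.ext_iff.mp h J).mpr hb ha
end
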